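/- Consider the slice category Top↓ℝ equipped with the flow T defined below. Two objects (X,f) and (Y,g) are weakly ε-interleaved with respect to T if and only if there exists a homeomorphism Φ : X → Y such that |f(x) − g(Φ(x))| ≤ ε for every x ∈ X. Consequently the interleaving distance d_((Top↓ℝ),T)((X,f),(Y,g)) equals d_∞((X,f),(Y,g)), defined as the infimum over all homeomorphisms Φ : X → Y of sup_{x∈X} |f(x) − g(Φ(x))| (and equal to ∞ if X and Y are not homeomorphic). -/

import Mathlib

open CategoryTheory
open scoped NNReal ENNReal

universe v u

/-- A flow on a category `C`: a lax monoidal action of `([0,∞), ≤, +)` on `C`. -/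
structure CatFlow (C : Type u) [Category.{v} C] where
  /-- the `ε`-translation endofunctors -/
  T : ℝ≥0 → C ⥤ C
  /-- the natural transformations `T ε ⟶ T ζ` for `ε ≤ ζ` -/
  Tle : ∀ {ε ζ : ℝ≥0}, ε ≤ ζ → (T ε ⟶ T ζ)
  Tle_refl : ∀ ε : ℝ≥0, Tle (le_refl ε) = 𝟙 (T ε)
  Tle_trans : ∀ {ε ζ δ : ℝ≥0} (h₁ : ε ≤ ζ) (h₂ : ζ ≤ δ), Tle h₁ ≫ Tle h₂ = Tle (h₁.trans h₂)
  /-- the unit coherence natural transformation `𝟭 C ⟶ T 0` -/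
  u : 𝟭 C ⟶ T 0
  /-- the multiplication coherence transformations; note `(T ζ ⋙ T ε).obj a = (T ε).obj ((T ζ).obj a)`,
  which is the composite `T_ε ∘ T_ζ` of the paper. -/
  μ : ∀ ε ζ : ℝ≥0, T ζ ⋙ T ε ⟶ T (ε + ζ)
  unit_left : ∀ (ε : ℝ≥0) (a : C),
    u.app ((T ε).obj a) ≫ (μ 0 ε).app a = eqToHom (by simp)
  unit_right : ∀ (ε : ℝ≥0) (a : C),
    (T ε).map (u.app a) ≫ (μ ε 0).app a = eqToHom (by simp)
  assoc : ∀ (ε ζ δ : ℝ≥0) (a : C),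
    (μ ε ζ).app ((T δ).obj a) ≫ (μ (ε + ζ) δ).app a
      = (T ε).map ((μ ζ δ).app a) ≫ (μ ε (ζ + δ)).app a ≫ eqToHom (by rw [add_assoc])
  compat : ∀ {ε ζ δ κ : ℝ≥0} (h₁ : ε ≤ δ) (h₂ : ζ ≤ κ) (a : C),
    (μ ε ζ).app a ≫ (Tle (add_le_add h₁ h₂)).app a
      = (T ε).map ((Tle h₂).app a) ≫ (Tle h₁).app ((T κ).obj a) ≫ (μ δ κ).app a

/-- `(φ, ψ)` is a weak `ε`-interleaving of `a` and `b`. -/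
structure IsWeakInterleaving {C : Type u} [Category.{v} C] (F : CatFlow C) (ε : ℝ≥0)
    (a b : C) (φ : a ⟶ (F.T ε).obj b) (ψ : b ⟶ (F.T ε).obj a) : Prop where
  left : φ ≫ (F.T ε).map ψ ≫ (F.μ ε ε).app a
      = F.u.app a ≫ (F.Tle (show (0:ℝ≥0) ≤ ε + ε from zero_le)).app a
  right : ψ ≫ (F.T ε).map φ ≫ (F.μ ε ε).app b
      = F.u.app b ≫ (F.Tle (show (0:ℝ≥0) ≤ ε + ε from zero_le)).app b

/-- `a` and `b` are weakly `ε`-interleaved. -/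
def WeaklyInterleaved {C : Type u} [Category.{v} C] (F : CatFlow C) (ε : ℝ≥0) (a b : C) : Prop :=
  ∃ φ ψ, IsWeakInterleaving F ε a b φ ψ

/-- The interleaving distance associated to a flow. -/
noncomputable def interleavingDist {C : Type u} [Category.{v} C] (F : CatFlow C) (a b : C) :
    ℝ≥0∞ :=
  sInf { x : ℝ≥0∞ | ∃ ε : ℝ≥0, x = ε ∧ WeaklyInterleaved F ε a b }

noncomputable section OverR

open Set

/-- The category of `ℝ`-spaces: the slice category `Top ↓ ℝ`. -/
abbrev RSpaces : Type 1 := Over (TopCat.of ℝ)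

/-- The value of the reference map of an `ℝ`-space at a point. -/
def fval (a : RSpaces) (x : a.left) : ℝ := a.hom x

/-- The `ε`-translation of an `ℝ`-space: `(X, f) ↦ (X × [-ε, ε], (x,t) ↦ f x + t)`. -/
def thickObj (ε : ℝ≥0) (a : RSpaces) : RSpaces :=
  Over.mk (Y := TopCat.of (a.left × (Icc (-(ε:ℝ)) (ε:ℝ))))
    (TopCat.ofHom (ContinuousMap.mk
      (fun (p : a.left × (Icc (-(ε:ℝ)) (ε:ℝ))) => fval a p.1 + (p.2 : ℝ))
      (by
        have hc : Continuous (fval a) := ContinuousMap.continuous a.hom.hom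
        exact (hc.comp continuous_fst).add (continuous_subtype_val.comp continuous_snd))))

/-- The `ε`-translation functor on `ℝ`-spaces. -/
def thickT (ε : ℝ≥0) : RSpaces ⥤ RSpaces where
  obj a := thickObj ε a
  map {a b} φ := Over.homMk
    (TopCat.ofHom (ContinuousMap.mk
      (fun (p : a.left × (Icc (-(ε:ℝ)) (ε:ℝ))) =>
        ((φ.left p.1, p.2) : b.left × (Icc (-(ε:ℝ)) (ε:ℝ))))
      (((ContinuousMap.continuous φ.left.hom).comp continuous_fst).prodMk continuous_snd)))
    (by
      ext p
      obtain ⟨x, t⟩ := p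
      show fval b (φ.left x) + (t : ℝ) = fval a x + (t : ℝ)
      exact congrArg (fun r => r + (t : ℝ))
        (congrArg (fun (f : a.left ⟶ TopCat.of ℝ) => f x) (Over.w φ)))
  map_id a := by
    ext p
    rfl
  map_comp φ ψ := by
    ext p
    rfl

lemma mem_Icc_add {ε ζ : ℝ≥0} {t s : ℝ} (ht : t ∈ Icc (-(ζ:ℝ)) (ζ:ℝ))
    (hs : s ∈ Icc (-(ε:ℝ)) (ε:ℝ)) :
    t + s ∈ Icc (-((ε + ζ : ℝ≥0) : ℝ)) ((ε + ζ : ℝ≥0) : ℝ) := by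
  rcases ht with ⟨h1, h2⟩
  rcases hs with ⟨h3, h4⟩
  constructor <;> (push_cast; linarith)

/-- The cast morphism `(thickT ε).obj a ⟶ (thickT ζ).obj a` associated to an equality
`ε = ζ`. -/
def castHom {ε ζ : ℝ≥0} (h : ε = ζ) (a : RSpaces) :
    (thickT ε).obj a ⟶ (thickT ζ).obj a :=
  Over.homMk
    (TopCat.ofHom (ContinuousMap.mk (fun (p : a.left × (Icc (-(ε:ℝ)) (ε:ℝ))) =>
        ((p.1, ⟨(p.2 : ℝ), by rw [← h]; exact p.2.2⟩) : a.left × (Icc (-(ζ:ℝ)) (ζ:ℝ))))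
      (continuous_fst.prodMk
        ((continuous_subtype_val.comp continuous_snd).subtype_mk
          (fun (p : a.left × (Icc (-(ε:ℝ)) (ε:ℝ))) => by rw [← h]; exact p.2.2)))))
    (by ext p; rfl)

lemma eqToHom_thickT {ε ζ : ℝ≥0} (h : ε = ζ) (a : RSpaces) :
    eqToHom (show (thickT ε).obj a = (thickT ζ).obj a by rw [h]) = castHom h a := by
  subst h
  simp only [eqToHom_refl]
  ext p
  rfl

/-- The flow on the slice category `Top ↓ ℝ` of `ℝ`-spaces, whose `ε`-translation is
`(X, f) ↦ (X × [-ε, ε], (x,t) ↦ f x + t)`. -/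
def overFlowR : CatFlow RSpaces where
  T := thickT
  Tle {ε ζ} h :=
    { app := fun a => Over.homMk
        (TopCat.ofHom (ContinuousMap.mk (fun (p : a.left × (Icc (-(ε:ℝ)) (ε:ℝ))) =>
            ((p.1, ⟨(p.2 : ℝ),
            Set.Icc_subset_Icc (neg_le_neg (NNReal.coe_le_coe.2 h)) (NNReal.coe_le_coe.2 h)
              p.2.2⟩) : a.left × (Icc (-(ζ:ℝ)) (ζ:ℝ))))
          (continuous_fst.prodMk
            ((continuous_subtype_val.comp continuous_snd).subtype_mk
              (fun (p : a.left × (Icc (-(ε:ℝ)) (ε:ℝ))) =>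
                Set.Icc_subset_Icc (neg_le_neg (NNReal.coe_le_coe.2 h))
                (NNReal.coe_le_coe.2 h) p.2.2)))))
        (by ext p; rfl)
      naturality := fun a b φ => by ext p; rfl }
  Tle_refl ε := by
    ext a p
    rfl
  Tle_trans h₁ h₂ := by
    ext a p
    rfl
  u :=
    { app := fun a => Over.homMk
        (TopCat.ofHom (ContinuousMap.mk (fun (x : a.left) =>
            ((x, ⟨0, by constructor <;> simp⟩) :
              a.left × (Icc (-((0:ℝ≥0):ℝ)) ((0:ℝ≥0):ℝ))))
          (continuous_id.prodMk continuous_const)))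
        (by
          ext x
          show fval a x + (0 : ℝ) = fval a x
          exact add_zero _)
      naturality := fun a b φ => by ext p; rfl }
  μ ε ζ :=
    { app := fun a => Over.homMk
        (TopCat.ofHom (ContinuousMap.mk
          (fun (p : (a.left × (Icc (-(ζ:ℝ)) (ζ:ℝ))) × (Icc (-(ε:ℝ)) (ε:ℝ))) =>
            ((p.1.1, ⟨(p.1.2 : ℝ) + (p.2 : ℝ), mem_Icc_add p.1.2.2 p.2.2⟩) :
              a.left × (Icc (-((ε + ζ : ℝ≥0) : ℝ)) ((ε + ζ : ℝ≥0) : ℝ))))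
          ((continuous_fst.comp continuous_fst).prodMk
            (((continuous_subtype_val.comp (continuous_snd.comp continuous_fst)).add
              (continuous_subtype_val.comp continuous_snd)).subtype_mk
                (fun (q : (a.left × (Icc (-(ζ:ℝ)) (ζ:ℝ))) × (Icc (-(ε:ℝ)) (ε:ℝ))) =>
                  mem_Icc_add q.1.2.2 q.2.2)))))
        (by
          ext p
          obtain ⟨⟨x, t⟩, s⟩ := p
          show fval a x + ((t : ℝ) + (s : ℝ)) = (fval a x + (t : ℝ)) + (s : ℝ)
          exact (add_assoc _ _ _).symm)
      naturality := fun a b φ => by ext p; rfl }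
  unit_left ε a := by
    rw [eqToHom_thickT (zero_add ε).symm a]
    ext p
    obtain ⟨x, t⟩ := p
    refine Prod.ext rfl (Subtype.ext ?_)
    show ((t : ℝ) + 0) = (t : ℝ)
    exact add_zero _
  unit_right ε a := by
    rw [eqToHom_thickT (add_zero ε).symm a]
    ext p
    obtain ⟨x, t⟩ := p
    refine Prod.ext rfl (Subtype.ext ?_)
    show ((0 : ℝ) + (t : ℝ)) = (t : ℝ)
    exact zero_add _
  assoc ε ζ δ a := by
    rw [eqToHom_thickT (add_assoc ε ζ δ).symm a]
    ext p
    obtain ⟨⟨⟨x, t1⟩, t2⟩, t3⟩ := p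
    refine Prod.ext rfl (Subtype.ext ?_)
    show ((t1 : ℝ) + ((t2 : ℝ) + (t3 : ℝ)))
        = ((t1 : ℝ) + (t2 : ℝ)) + (t3 : ℝ)
    exact (add_assoc _ _ _).symm
  compat h₁ h₂ a := by
    ext p
    rfl

end OverR

/-!
A morphism `(X, f) ⟶ T_ε (Y, g)` is a pair `x ↦ (Φ x, t x)` with `g (Φ x) + t x = f x`,
so its height `t = f - g ∘ Φ` is determined by `Φ`, and such a `Φ` occurs exactly when
`|f - g ∘ Φ| ≤ ε`. For the same reason the interleaving equations reduce to their first
coordinates, which say that the two underlying maps `X → Y` and `Y → X` are mutually inverse.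
-/

lemma interleavingDist_eq_iInf {C : Type u} [Category.{v} C] {F : CatFlow C} {a b : C}
    {ι : Sort*} (D : ι → ℝ≥0∞)
    (h : ∀ ε : ℝ≥0, WeaklyInterleaved F ε a b ↔ ∃ i, D i ≤ ε) :
    interleavingDist F a b = ⨅ i, D i := by
  refine le_antisymm (le_iInf fun i => ?_) (le_sInf ?_)
  · rcases eq_or_ne (D i) ⊤ with hi | hi
    · exact hi ▸ le_top
    · rw [← ENNReal.coe_toNNReal hi]
      exact sInf_le ⟨_, rfl, (h _).2 ⟨i, (ENNReal.coe_toNNReal hi).ge⟩⟩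
  · rintro _ ⟨ε, rfl, hε⟩
    obtain ⟨i, hi⟩ := (h ε).1 hε
    exact iInf_le_of_le i hi

namespace RSpaces

open Set

variable {ε : ℝ≥0} {a b c : RSpaces}

lemma continuous_fval (a : RSpaces) : Continuous (fval a) :=
  a.hom.hom.continuous

lemma fval_fst_add_snd (φ : c ⟶ (thickT ε).obj a) (x : c.left) :
    fval a (φ.left x).1 + (φ.left x).2 = fval c x :=
  ConcreteCategory.congr_hom (Over.w φ) x

lemma abs_fval_sub_fval_fst_le (φ : c ⟶ (thickT ε).obj a) (x : c.left) :
    |fval c x - fval a (φ.left x).1| ≤ ε := by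
  have hφ := fval_fst_add_snd φ x
  have ht := (φ.left x).2.2
  rw [abs_le]
  constructor <;> linarith [ht.1, ht.2]

/-- The height coordinate of a morphism into a thickening is forced by commutation over `ℝ`. -/
lemma thickT_hom_ext {φ ψ : c ⟶ (thickT ε).obj a}
    (h : ∀ x, (φ.left x).1 = (ψ.left x).1) : φ = ψ := by
  ext x
  refine Prod.ext (h x) (Subtype.ext ?_)
  have hφ := fval_fst_add_snd φ x
  have hψ := fval_fst_add_snd ψ x
  rw [h x] at hφ
  linarith

def thickLift (Φ : C(c.left, a.left)) (hΦ : ∀ x, |fval c x - fval a (Φ x)| ≤ ε) :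
    c ⟶ (thickT ε).obj a :=
  Over.homMk
    (TopCat.ofHom
      ⟨fun x => (Φ x, ⟨fval c x - fval a (Φ x), mem_Icc.2 (abs_le.1 (hΦ x))⟩),
        Φ.continuous.prodMk
          (((continuous_fval c).sub ((continuous_fval a).comp Φ.continuous)).subtype_mk _)⟩)
    (by ext x; exact add_sub_cancel _ _)

lemma isWeakInterleaving_iff (φ : a ⟶ (overFlowR.T ε).obj b)
    (ψ : b ⟶ (overFlowR.T ε).obj a) :
    IsWeakInterleaving overFlowR ε a b φ ψ ↔
      (∀ x, (ψ.left (φ.left x).1).1 = x) ∧ ∀ y, (φ.left (ψ.left y).1).1 = y := by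
  constructor
  · rintro ⟨hl, hr⟩
    exact ⟨fun x => congrArg Prod.fst (ConcreteCategory.congr_hom (congrArg (·.left) hl) x),
      fun y => congrArg Prod.fst (ConcreteCategory.congr_hom (congrArg (·.left) hr) y)⟩
  · rintro ⟨hl, hr⟩
    exact ⟨thickT_hom_ext hl, thickT_hom_ext hr⟩

lemma weaklyInterleaved_iff_exists_homeomorph (ε : ℝ≥0) (a b : RSpaces) :
    WeaklyInterleaved overFlowR ε a b ↔
      ∃ Φ : a.left ≃ₜ b.left, ∀ x, |fval a x - fval b (Φ x)| ≤ ε := by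
  constructor
  · rintro ⟨φ, ψ, h⟩
    obtain ⟨hl, hr⟩ := (isWeakInterleaving_iff φ ψ).1 h
    refine ⟨⟨⟨fun x => (φ.left x).1, fun y => (ψ.left y).1, hl, hr⟩,
      continuous_fst.comp φ.left.hom.continuous, continuous_fst.comp ψ.left.hom.continuous⟩,
      abs_fval_sub_fval_fst_le φ⟩
  · rintro ⟨Φ, hΦ⟩
    have hΦ_symm : ∀ y, |fval b y - fval a (Φ.symm y)| ≤ ε := fun y => by
      simpa [abs_sub_comm] using hΦ (Φ.symm y)
    exact ⟨thickLift Φ hΦ, thickLift Φ.symm hΦ_symm, (isWeakInterleaving_iff _ _).2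
      ⟨Φ.symm_apply_apply, Φ.apply_symm_apply⟩⟩

end RSpaces

/-- Two `ℝ`-spaces `(X,f)` and `(Y,g)` are weakly `ε`-interleaved for the flow on
`Top ↓ ℝ` iff there is a homeomorphism `Φ : X → Y` with `|f x - g (Φ x)| ≤ ε` for all
`x`; consequently the interleaving distance coincides with the extended `L∞`-distance
`d_∞((X,f),(Y,g)) = inf_Φ sup_x |f x - g (Φ x)|` (which is `∞` if `X ≄ Y`). -/
theorem overFlowR_interleaving_iff (a b : RSpaces) :
    (∀ ε : ℝ≥0, WeaklyInterleaved overFlowR ε a b ↔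
      ∃ Φ : a.left ≃ₜ b.left, ∀ x : a.left, |fval a x - fval b (Φ x)| ≤ (ε : ℝ)) ∧
    interleavingDist overFlowR a b =
      ⨅ Φ : a.left ≃ₜ b.left, ⨆ x : a.left, ENNReal.ofReal |fval a x - fval b (Φ x)| := by
  refine ⟨fun ε => RSpaces.weaklyInterleaved_iff_exists_homeomorph ε a b,
    interleavingDist_eq_iInf _ fun ε => ?_⟩
  simp only [RSpaces.weaklyInterleaved_iff_exists_homeomorph, iSup_le_iff, ENNReal.ofReal_le_coe]
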